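/- arXiv:2411.14221 — 4 statements merged into one kernel-verified Lean document; each statement's English description precedes it below -/
import Mathlib

section
/- Let F(x) = ∑_{n≥1} f(n) e^{2πi λ_n x} with f(n) ≥ 0, ∑ f(n) < ∞. For any integer M ≥ 1, any set 𝓜 ⊆ ℕ of cardinality M, and any reals X, Y with 2^M X > Y ≥ 1: max_{x ∈ [Y, 2^M X]} Re(F(x)) ≥ (1/4) ∑_{m ∈ 𝓜} f(m) + O(Y(M + log X)/X · ∑_{n≥1} f(n)), with an absolute implied constant. -/
/-!
Resonance method. Put `e(t) = exp(2πit)`, `σ_S = ∑_{m ∈ S} λ_m`, `T = 2^M X`, and take the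
resonator `R(x) = ∏_{m ∈ 𝓜} (1 + e(λ_m x)) = ∑_{S ⊆ 𝓜} e(σ_S x)` on the grid
`x_{jk} = (j - k) T / N`, `j, k < N`. Expanding `|R|²` gives
`∑_{j,k} F(x_{jk}) |R(x_{jk})|² = ∑_n f(n) ∑_{S,S'} K(λ_n + σ_S - σ_{S'})` with the nonnegative
kernel `K(β) = |∑_{j<N} e(β j T / N)|²`. All terms are nonnegative, and for `m ∈ 𝓜` the shift by
`λ_m` keeps at least half of the total weight `V = ∑_{S,S'} K(σ_S - σ_{S'}) = ∑_{j,k} |R(x_{jk})|²`,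
so the weighted sum is at least `½ V ∑_{m ∈ 𝓜} f(m)`. Since `Re F` is even, every grid point with
`|x_{jk}| ≥ Y` contributes at most `max_{[Y,T]} Re F` times its weight; the others number
`O(N² Y / T + N)` and carry weight at most `4^M` each, which is `O(Y / X) V` once `N ≥ T / Y`
(as `V ≥ 2^M N²`). Finally `Y / X = O(Y (M + log X) / X)` because `2^M X > 1` and `M ≥ 1`.
-/

open Real Finset FourierTransform ComplexConjugate

noncomputable section

lemma coe_fourierChar_neg (t : ℝ) : (𝐞 (-t) : ℂ) = conj (𝐞 t : ℂ) := by
  rw [AddChar.map_neg_eq_inv, Circle.coe_inv_eq_conj]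

lemma coe_fourierChar_sub (s t : ℝ) : (𝐞 (s - t) : ℂ) = 𝐞 s * conj (𝐞 t : ℂ) := by
  rw [sub_eq_add_neg, AddChar.map_add_eq_mul, Circle.coe_mul, coe_fourierChar_neg]

lemma sum_mul_le_of_le_of_filter {α : Type*} (G : Finset α) (P : α → Prop) [DecidablePred P]
    {a w : α → ℝ} {s B : ℝ} (hw : ∀ i ∈ G, 0 ≤ w i) (hs : ∀ i ∈ G, P i → a i ≤ s)
    (hB : ∀ i ∈ G, a i ≤ B) (hsB : -B ≤ s) :
    ∑ i ∈ G, a i * w i ≤ s * ∑ i ∈ G, w i + 2 * B * ∑ i ∈ G with ¬ P i, w i := by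
  rw [sum_filter, mul_sum, mul_sum, ← sum_add_distrib]
  refine sum_le_sum fun i hi => ?_
  split_ifs with hPi
  · nlinarith [hw i hi, hs i hi hPi]
  · nlinarith [hw i hi, hB i hi]

lemma three_div_ten_le_natCast_add_log {M : ℕ} (hM : 1 ≤ M) {X : ℝ} (hX : 1 ≤ 2 ^ M * X) :
    3 / 10 ≤ M + log X := by
  have hX0 : 0 < X := pos_of_mul_pos_right (a := (2 : ℝ) ^ M) (by linarith) (by positivity)
  have hlog : 0 ≤ M * log 2 + log X := by
    rw [← log_pow, ← log_mul (by positivity) hX0.ne']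
    exact log_nonneg hX
  have hM' : (1 : ℝ) ≤ M := by exact_mod_cast hM
  nlinarith [log_two_lt_d9]

section FourierSums

variable {ι : Type*} (s : Finset ι) (a : ι → ℝ)

lemma normSq_sum_fourierChar :
    (Complex.normSq (∑ i ∈ s, (𝐞 (a i) : ℂ)) : ℂ) = ∑ i ∈ s, ∑ j ∈ s, (𝐞 (a i - a j) : ℂ) := by
  simp_rw [← Complex.mul_conj, map_sum, sum_mul_sum, coe_fourierChar_sub]

lemma normSq_sum_fourierChar_le : Complex.normSq (∑ i ∈ s, (𝐞 (a i) : ℂ)) ≤ (#s : ℝ) ^ 2 := by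
  rw [Complex.normSq_eq_norm_sq]
  gcongr
  calc ‖∑ i ∈ s, (𝐞 (a i) : ℂ)‖ ≤ ∑ i ∈ s, ‖(𝐞 (a i) : ℂ)‖ := norm_sum_le _ _
    _ = #s := by simp [Circle.norm_coe]

end FourierSums

def gridPoint (h : ℝ) (p : ℕ × ℕ) : ℝ := ((p.1 : ℝ) - p.2) * h

lemma abs_gridPoint_le {h : ℝ} (hh : 0 ≤ h) {N : ℕ} {p : ℕ × ℕ} (hp : p ∈ range N ×ˢ range N) :
    |gridPoint h p| ≤ N * h := by
  rw [mem_product, mem_range, mem_range] at hp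
  have hp₁ : (p.1 : ℝ) < N := by exact_mod_cast hp.1
  have hp₂ : (p.2 : ℝ) < N := by exact_mod_cast hp.2
  rw [gridPoint, abs_mul, abs_of_nonneg hh]
  gcongr
  rw [abs_sub_le_iff]
  constructor <;> linarith [(p.1.cast_nonneg : (0 : ℝ) ≤ p.1), (p.2.cast_nonneg : (0 : ℝ) ≤ p.2)]

lemma card_filter_abs_sub_lt_le (N j : ℕ) {r : ℝ} (hr : 0 ≤ r) :
    (#{k ∈ range N | |(j : ℝ) - (k : ℕ)| < r} : ℝ) ≤ 2 * r + 1 := by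
  set D := ⌊r⌋₊
  have hsub : {k ∈ range N | |(j : ℝ) - (k : ℕ)| < r} ⊆ Icc (j - D) (j + D) := by
    intro k hk
    rw [mem_filter, abs_sub_lt_iff] at hk
    have hjk : (j : ℝ) < k + D + 1 := by linarith [Nat.lt_floor_add_one r]
    have hkj : (k : ℝ) < j + D + 1 := by linarith [Nat.lt_floor_add_one r]
    have hjk' : j < k + D + 1 := by exact_mod_cast hjk
    have hkj' : k < j + D + 1 := by exact_mod_cast hkj
    rw [mem_Icc]
    omega
  have hD : (#(Icc (j - D) (j + D)) : ℝ) ≤ 2 * D + 1 := by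
    rw [Nat.card_Icc]
    exact_mod_cast (by omega : j + D + 1 - (j - D) ≤ 2 * D + 1)
  calc (#{k ∈ range N | |(j : ℝ) - (k : ℕ)| < r} : ℝ) ≤ #(Icc (j - D) (j + D)) := by
        exact_mod_cast card_le_card hsub
    _ ≤ 2 * r + 1 := by linarith [Nat.floor_le hr]

lemma card_filter_abs_gridPoint_lt_le {h : ℝ} (hh : 0 < h) (N : ℕ) {Y : ℝ} (hY : 0 ≤ Y) :
    (#{p ∈ range N ×ˢ range N | |gridPoint h p| < Y} : ℝ) ≤ N * (2 * (Y / h) + 1) := by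
  have hrow : ∀ j k : ℕ, |gridPoint h (j, k)| < Y ↔ |(j : ℝ) - (k : ℕ)| < Y / h := fun j k => by
    rw [gridPoint, abs_mul, abs_of_pos hh, lt_div_iff₀ hh]
  rw [card_filter, Nat.cast_sum, sum_product]
  calc ∑ j ∈ range N, ∑ k ∈ range N, ((if |gridPoint h (j, k)| < Y then 1 else 0 : ℕ) : ℝ)
      = ∑ j ∈ range N, (#{k ∈ range N | |(j : ℝ) - (k : ℕ)| < Y / h} : ℝ) := by
        simp_rw [hrow, Nat.cast_ite, Nat.cast_one, Nat.cast_zero, sum_boole]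
    _ ≤ ∑ j ∈ range N, (2 * (Y / h) + 1) :=
        sum_le_sum fun j _ => card_filter_abs_sub_lt_le N j (div_nonneg hY hh.le)
    _ = N * (2 * (Y / h) + 1) := by rw [sum_const, card_range, nsmul_eq_mul]

section Kernel

def fejerKernel (h : ℝ) (N : ℕ) (β : ℝ) : ℝ :=
  Complex.normSq (∑ j ∈ range N, (𝐞 (β * (j * h)) : ℂ))

variable (h : ℝ) (N : ℕ)

lemma fejerKernel_nonneg (β : ℝ) : 0 ≤ fejerKernel h N β := Complex.normSq_nonneg _

lemma fejerKernel_le (β : ℝ) : fejerKernel h N β ≤ (N : ℝ) ^ 2 := by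
  simpa [fejerKernel] using normSq_sum_fourierChar_le (range N) (fun j : ℕ => β * (j * h))

lemma fejerKernel_zero : fejerKernel h N 0 = (N : ℝ) ^ 2 := by
  simp [fejerKernel, sq]

lemma fejerKernel_neg (β : ℝ) : fejerKernel h N (-β) = fejerKernel h N β := by
  simp_rw [fejerKernel, neg_mul, coe_fourierChar_neg, ← map_sum, Complex.normSq_conj]

lemma sum_grid_fourierChar (β : ℝ) :
    ∑ p ∈ range N ×ˢ range N, (𝐞 (β * gridPoint h p) : ℂ) = fejerKernel h N β := by
  rw [fejerKernel, normSq_sum_fourierChar, sum_product]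
  refine sum_congr rfl fun j _ => sum_congr rfl fun k _ => ?_
  rw [gridPoint]
  ring_nf

end Kernel

section Resonator

variable {ι : Type*} (ω : ι → ℝ) (𝓜 : Finset ι)

/-- Adding `m` to `T ∌ m`, or removing it from `T ∋ m` and swapping `S, T` (`K` is even), maps
each half of the left-hand side into the right-hand side. -/
lemma sum_powerset_sum_powerset_le_two_mul [DecidableEq ι] {K : ℝ → ℝ} (hK0 : ∀ t, 0 ≤ K t)
    (hK : ∀ t, K (-t) = K t) {m : ι} (hm : m ∈ 𝓜) :
    ∑ S ∈ 𝓜.powerset, ∑ T ∈ 𝓜.powerset, K (∑ i ∈ S, ω i - ∑ i ∈ T, ω i) ≤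
      2 * ∑ S ∈ 𝓜.powerset, ∑ T ∈ 𝓜.powerset, K (ω m + ∑ i ∈ S, ω i - ∑ i ∈ T, ω i) := by
  set 𝓜₀ := 𝓜.erase m
  have hm₀ : m ∉ 𝓜₀ := notMem_erase m 𝓜
  have h𝓜 : 𝓜 = insert m 𝓜₀ := (insert_erase hm).symm
  have hsum_insert : ∀ T ∈ 𝓜₀.powerset, ∑ i ∈ insert m T, ω i = ω m + ∑ i ∈ T, ω i :=
    fun T hT => sum_insert fun hmT => hm₀ (mem_powerset.1 hT hmT)
  set R := ∑ S ∈ 𝓜.powerset, ∑ T ∈ 𝓜.powerset, K (ω m + ∑ i ∈ S, ω i - ∑ i ∈ T, ω i)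
  have hsplit : ∀ (F : Finset ι → ℝ), ∑ T ∈ 𝓜.powerset, F T =
      ∑ T ∈ 𝓜₀.powerset, F T + ∑ T ∈ 𝓜₀.powerset, F (insert m T) := fun F => by
    rw [h𝓜, sum_powerset_insert hm₀]
  have hwithout : ∑ S ∈ 𝓜.powerset, ∑ T ∈ 𝓜₀.powerset, K (∑ i ∈ S, ω i - ∑ i ∈ T, ω i) ≤ R := by
    refine sum_le_sum fun S _ => ?_
    rw [hsplit]
    refine le_add_of_nonneg_of_le (sum_nonneg fun _ _ => hK0 _) (le_of_eq ?_)
    refine sum_congr rfl fun T hT => ?_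
    rw [hsum_insert T hT]; ring_nf
  have hwith : ∑ S ∈ 𝓜.powerset, ∑ T ∈ 𝓜₀.powerset,
      K (∑ i ∈ S, ω i - ∑ i ∈ insert m T, ω i) ≤ R := by
    rw [sum_comm]
    calc _ = ∑ T ∈ 𝓜₀.powerset, ∑ S ∈ 𝓜.powerset, K (ω m + ∑ i ∈ T, ω i - ∑ i ∈ S, ω i) := by
          refine sum_congr rfl fun T hT => sum_congr rfl fun S _ => ?_
          rw [hsum_insert T hT, ← hK]; ring_nf
      _ ≤ R := sum_le_sum_of_subset_of_nonneg (powerset_mono.2 (erase_subset m 𝓜))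
          fun _ _ _ => sum_nonneg fun _ _ => hK0 _
  calc _ = ∑ S ∈ 𝓜.powerset, ∑ T ∈ 𝓜₀.powerset, K (∑ i ∈ S, ω i - ∑ i ∈ T, ω i) +
        ∑ S ∈ 𝓜.powerset, ∑ T ∈ 𝓜₀.powerset, K (∑ i ∈ S, ω i - ∑ i ∈ insert m T, ω i) := by
        rw [← sum_add_distrib]
        exact sum_congr rfl fun S _ => hsplit _
    _ ≤ 2 * R := by linarith

/-- The expanded form of the paper's resonator `∏_{m ∈ 𝓜} (1 + e(ω m x))`. -/
def resonator (x : ℝ) : ℂ := ∑ S ∈ 𝓜.powerset, (𝐞 ((∑ m ∈ S, ω m) * x) : ℂ)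

def resonanceSum (h : ℝ) (N : ℕ) (β : ℝ) : ℝ :=
  ∑ S ∈ 𝓜.powerset, ∑ T ∈ 𝓜.powerset,
    fejerKernel h N (β + ∑ m ∈ S, ω m - ∑ m ∈ T, ω m)

lemma normSq_resonator_le (x : ℝ) : Complex.normSq (resonator ω 𝓜 x) ≤ 4 ^ #𝓜 := by
  refine (normSq_sum_fourierChar_le _ _).trans_eq ?_
  rw [card_powerset, Nat.cast_pow, Nat.cast_ofNat, ← pow_mul, mul_comm, pow_mul]
  norm_num

lemma sum_filter_normSq_resonator_le {h : ℝ} (hh : 0 < h) (N : ℕ) {Y : ℝ} (hY : 0 ≤ Y) :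
    ∑ p ∈ range N ×ˢ range N with |gridPoint h p| < Y,
        Complex.normSq (resonator ω 𝓜 (gridPoint h p)) ≤ 4 ^ #𝓜 * (N * (2 * (Y / h) + 1)) := by
  refine (sum_le_card_nsmul _ _ _ fun p _ => normSq_resonator_le ω 𝓜 _).trans ?_
  rw [nsmul_eq_mul, mul_comm]
  gcongr
  exact card_filter_abs_gridPoint_lt_le hh N hY

lemma resonanceSum_nonneg (h : ℝ) (N : ℕ) (β : ℝ) : 0 ≤ resonanceSum ω 𝓜 h N β :=
  sum_nonneg fun _ _ => sum_nonneg fun _ _ => fejerKernel_nonneg _ _ _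

lemma resonanceSum_le (h : ℝ) (N : ℕ) (β : ℝ) :
    resonanceSum ω 𝓜 h N β ≤ (2 ^ #𝓜 * N : ℝ) ^ 2 := by
  calc resonanceSum ω 𝓜 h N β ≤ ∑ S ∈ 𝓜.powerset, ∑ T ∈ 𝓜.powerset, (N : ℝ) ^ 2 :=
        sum_le_sum fun _ _ => sum_le_sum fun _ _ => fejerKernel_le _ _ _
    _ = (2 ^ #𝓜 * N : ℝ) ^ 2 := by
        simp only [sum_const, card_powerset, nsmul_eq_mul, Nat.cast_pow, Nat.cast_ofNat]
        ring

lemma two_pow_mul_sq_le_resonanceSum_zero (h : ℝ) (N : ℕ) :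
    2 ^ #𝓜 * (N : ℝ) ^ 2 ≤ resonanceSum ω 𝓜 h N 0 := by
  calc 2 ^ #𝓜 * (N : ℝ) ^ 2
      = ∑ S ∈ 𝓜.powerset, fejerKernel h N (0 + ∑ m ∈ S, ω m - ∑ m ∈ S, ω m) := by
        simp [fejerKernel_zero, card_powerset]
    _ ≤ resonanceSum ω 𝓜 h N 0 :=
        sum_le_sum fun S hS => single_le_sum (f := fun T => fejerKernel h N
          (0 + ∑ m ∈ S, ω m - ∑ m ∈ T, ω m)) (fun _ _ => fejerKernel_nonneg h N _) hS

lemma sum_grid_fourierChar_mul_normSq_resonator (h : ℝ) (N : ℕ) (β : ℝ) :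
    ∑ p ∈ range N ×ˢ range N,
        (𝐞 (β * gridPoint h p) : ℂ) * Complex.normSq (resonator ω 𝓜 (gridPoint h p)) =
      resonanceSum ω 𝓜 h N β := by
  simp_rw [resonator, normSq_sum_fourierChar, mul_sum, ← Circle.coe_mul,
    ← AddChar.map_add_eq_mul]
  rw [sum_comm]
  simp_rw [resonanceSum, Complex.ofReal_sum, ← sum_grid_fourierChar]
  refine sum_congr rfl fun S _ => ?_
  rw [sum_comm]
  refine sum_congr rfl fun T _ => sum_congr rfl fun p _ => ?_
  ring_nf

lemma resonanceSum_zero_le_two_mul [DecidableEq ι] (h : ℝ) (N : ℕ) {m : ι} (hm : m ∈ 𝓜) :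
    resonanceSum ω 𝓜 h N 0 ≤ 2 * resonanceSum ω 𝓜 h N (ω m) := by
  simpa only [resonanceSum, zero_add] using
    sum_powerset_sum_powerset_le_two_mul ω 𝓜 (fejerKernel_nonneg h N) (fejerKernel_neg h N) hm

end Resonator

def expSum (f lam : ℕ → ℝ) (x : ℝ) : ℂ := ∑' n, (f n : ℂ) * 𝐞 (lam n * x)

section Series

variable {f : ℕ → ℝ} (lam : ℕ → ℝ)

lemma norm_ofReal_mul_fourierChar (n : ℕ) (x : ℝ) : ‖(f n : ℂ) * 𝐞 (lam n * x)‖ = |f n| := by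
  rw [norm_mul, Circle.norm_coe, mul_one, Complex.norm_real, Real.norm_eq_abs]

lemma summable_ofReal_mul_fourierChar (hf : Summable f) (x : ℝ) :
    Summable fun n => (f n : ℂ) * 𝐞 (lam n * x) :=
  .of_norm <| by simpa only [norm_ofReal_mul_fourierChar] using hf.abs

lemma abs_re_expSum_le (hf : Summable f) (x : ℝ) : |(expSum f lam x).re| ≤ ∑' n, |f n| := by
  refine (Complex.abs_re_le_norm _).trans ?_
  refine (norm_tsum_le_tsum_norm ?_).trans_eq ?_ <;> simp only [norm_ofReal_mul_fourierChar]
  exact hf.abs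

lemma expSum_neg (x : ℝ) : expSum f lam (-x) = conj (expSum f lam x) := by
  simp_rw [expSum, Complex.conj_tsum, map_mul, Complex.conj_ofReal, mul_neg, coe_fourierChar_neg]

lemma sum_grid_expSum_mul_normSq_resonator (hf : Summable f) {ι : Type*} (ω : ι → ℝ)
    (𝓜 : Finset ι) (h : ℝ) (N : ℕ) :
    ∑ p ∈ range N ×ˢ range N,
        (expSum f lam (gridPoint h p)).re * Complex.normSq (resonator ω 𝓜 (gridPoint h p)) =
      ∑' n, f n * resonanceSum ω 𝓜 h N (lam n) := by
  have hsummable : ∀ p ∈ range N ×ˢ range N, Summable fun n =>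
      (f n : ℂ) * 𝐞 (lam n * gridPoint h p) * Complex.normSq (resonator ω 𝓜 (gridPoint h p)) :=
    fun p _ => (summable_ofReal_mul_fourierChar lam hf _).mul_right _
  have hcomplex : ∑ p ∈ range N ×ˢ range N,
      expSum f lam (gridPoint h p) * Complex.normSq (resonator ω 𝓜 (gridPoint h p)) =
        ((∑' n, f n * resonanceSum ω 𝓜 h N (lam n) : ℝ) : ℂ) := by
    simp_rw [expSum, ← tsum_mul_right, ← Summable.tsum_finsetSum hsummable, mul_assoc, ← mul_sum,
      sum_grid_fourierChar_mul_normSq_resonator, Complex.ofReal_tsum, Complex.ofReal_mul]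
  simpa only [Complex.re_sum, Complex.re_mul_ofReal, Complex.ofReal_re] using
    congrArg Complex.re hcomplex

lemma bddAbove_re_expSum (hf : Summable f) (A : Set ℝ) :
    BddAbove ((fun x => (expSum f lam x).re) '' A) :=
  ⟨∑' n, |f n|, Set.forall_mem_image.2 fun x _ => (le_abs_self _).trans (abs_re_expSum_le lam hf x)⟩

lemma re_expSum_le_sSup (hf : Summable f) {A : Set ℝ} {x : ℝ} (hx : |x| ∈ A) :
    (expSum f lam x).re ≤ sSup ((fun x => (expSum f lam x).re) '' A) := by
  have heven : (expSum f lam |x|).re = (expSum f lam x).re := by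
    rcases abs_choice x with hx' | hx' <;> rw [hx']
    rw [expSum_neg, Complex.conj_re]
  rw [← heven]
  exact le_csSup (bddAbove_re_expSum lam hf A) (Set.mem_image_of_mem _ hx)

lemma neg_tsum_abs_le_sSup_re_expSum (hf : Summable f) {A : Set ℝ} (hA : A.Nonempty) :
    -∑' n, |f n| ≤ sSup ((fun x => (expSum f lam x).re) '' A) := by
  obtain ⟨x, hx⟩ := hA
  exact (neg_le_of_abs_le (abs_re_expSum_le lam hf x)).trans
    (le_csSup (bddAbove_re_expSum lam hf A) (Set.mem_image_of_mem _ hx))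

lemma sum_mul_resonanceSum_zero_le (hf0 : ∀ n, 0 ≤ f n) (hf : Summable f) (𝓜 : Finset ℕ) (h : ℝ)
    (N : ℕ) :
    (∑ m ∈ 𝓜, f m) * resonanceSum lam 𝓜 h N 0 ≤
      2 * ∑' n, f n * resonanceSum lam 𝓜 h N (lam n) := by
  have hsummable : Summable fun n => f n * resonanceSum lam 𝓜 h N (lam n) :=
    .of_nonneg_of_le (fun n => mul_nonneg (hf0 n) (resonanceSum_nonneg ..))
      (fun n => mul_le_mul_of_nonneg_left (resonanceSum_le ..) (hf0 n)) (hf.mul_right _)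
  calc (∑ m ∈ 𝓜, f m) * resonanceSum lam 𝓜 h N 0
      ≤ ∑ m ∈ 𝓜, f m * (2 * resonanceSum lam 𝓜 h N (lam m)) := by
        rw [sum_mul]
        exact sum_le_sum fun m hm =>
          mul_le_mul_of_nonneg_left (resonanceSum_zero_le_two_mul lam 𝓜 h N hm) (hf0 m)
    _ = 2 * ∑ m ∈ 𝓜, f m * resonanceSum lam 𝓜 h N (lam m) := by
        rw [mul_sum]; exact sum_congr rfl fun m _ => by ring
    _ ≤ 2 * ∑' n, f n * resonanceSum lam 𝓜 h N (lam n) := by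
        gcongr
        exact hsummable.sum_le_tsum 𝓜 fun n _ => mul_nonneg (hf0 n) (resonanceSum_nonneg ..)

theorem half_sum_sub_le_sSup_re_expSum (hf0 : ∀ n, 0 ≤ f n) (hf : Summable f) (𝓜 : Finset ℕ)
    {Y T : ℝ} (hY : 0 < Y) (hYT : Y ≤ T) {N : ℕ} (hN : 0 < N) :
    1 / 2 * ∑ m ∈ 𝓜, f m - 2 * (2 * 2 ^ #𝓜 * Y / T + 2 ^ #𝓜 / N) * ∑' n, f n ≤
      sSup ((fun x => (expSum f lam x).re) '' Set.Icc Y T) := by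
  have hT : 0 < T := hY.trans_le hYT
  have hN' : (0 : ℝ) < N := by exact_mod_cast hN
  set h := T / N with hh
  have hh0 : 0 < h := div_pos hT hN'
  set G := range N ×ˢ range N
  set w := fun p => Complex.normSq (resonator lam 𝓜 (gridPoint h p))
  set V := resonanceSum lam 𝓜 h N 0
  set s := sSup ((fun x => (expSum f lam x).re) '' Set.Icc Y T)
  have habs : ∑' n, |f n| = ∑' n, f n := tsum_congr fun n => abs_of_nonneg (hf0 n)
  have hV : ∑ p ∈ G, w p = V := by
    have := sum_grid_fourierChar_mul_normSq_resonator lam 𝓜 h N 0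
    simp only [zero_mul, AddChar.map_zero_eq_one, Circle.coe_one, one_mul] at this
    exact_mod_cast this
  have hVpos : 0 < V :=
    lt_of_lt_of_le (by positivity) (two_pow_mul_sq_le_resonanceSum_zero lam 𝓜 h N)
  have hlower : (∑ m ∈ 𝓜, f m) * V ≤ 2 * ∑ p ∈ G, (expSum f lam (gridPoint h p)).re * w p := by
    rw [sum_grid_expSum_mul_normSq_resonator lam hf]
    exact sum_mul_resonanceSum_zero_le lam hf0 hf 𝓜 h N
  have hupper : ∑ p ∈ G, (expSum f lam (gridPoint h p)).re * w p ≤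
      s * V + 2 * (∑' n, f n) * ∑ p ∈ G with |gridPoint h p| < Y, w p := by
    simpa only [hV, not_le, habs] using sum_mul_le_of_le_of_filter G (Y ≤ |gridPoint h ·|) (w := w)
      (fun p _ => Complex.normSq_nonneg _)
      (fun p hp hYp => re_expSum_le_sSup lam hf
        (Set.mem_Icc.2 ⟨hYp, (abs_gridPoint_le hh0.le hp).trans_eq (mul_div_cancel₀ _ hN'.ne')⟩))
      (fun p _ => (le_abs_self _).trans (abs_re_expSum_le lam hf _))
      (neg_tsum_abs_le_sSup_re_expSum lam hf ⟨Y, Set.left_mem_Icc.2 hYT⟩)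
  have hout : ∑ p ∈ G with |gridPoint h p| < Y, w p ≤ (2 * 2 ^ #𝓜 * Y / T + 2 ^ #𝓜 / N) * V :=
    calc _ ≤ 4 ^ #𝓜 * (N * (2 * (Y / h) + 1)) := sum_filter_normSq_resonator_le lam 𝓜 hh0 N hY.le
      _ = (2 * 2 ^ #𝓜 * Y / T + 2 ^ #𝓜 / N) * (2 ^ #𝓜 * N ^ 2) := by
        rw [hh, show (4 : ℝ) ^ #𝓜 = 2 ^ #𝓜 * 2 ^ #𝓜 by rw [← mul_pow]; norm_num]
        field_simp
      _ ≤ _ := by gcongr; exact two_pow_mul_sq_le_resonanceSum_zero lam 𝓜 h N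
  have hSf : 0 ≤ ∑' n, f n := tsum_nonneg hf0
  refine le_of_mul_le_mul_right ?_ hVpos
  nlinarith [mul_le_mul_of_nonneg_left hout (by positivity : (0 : ℝ) ≤ 2 * ∑' n, f n)]

end Series

end

theorem resonance_lower_bound_positive_coeffs :
    ∃ C : ℝ, 0 < C ∧
      ∀ (lam : ℕ → ℝ), (∀ n, 0 ≤ lam n) → StrictMono lam →
      ∀ (f : ℕ → ℝ), (∀ n, 0 ≤ f n) → Summable f →
      ∀ (F : ℝ → ℂ),
        (∀ x : ℝ, F x = ∑' n : ℕ, (f n : ℂ) * Complex.exp (2 * π * Complex.I * lam n * x)) →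
      ∀ (M : ℕ), 1 ≤ M →
      ∀ (𝓜 : Finset ℕ), 𝓜.card = M →
      ∀ (X Y : ℝ), 1 ≤ Y → Y < 2 ^ M * X →
        sSup ((fun x => (F x).re) '' Set.Icc Y (2 ^ M * X)) ≥
          (1 / 4) * ∑ m ∈ 𝓜, f m -
            C * (Y * ((M : ℝ) + Real.log X) / X) * ∑' n : ℕ, f n := by
  refine ⟨20, by norm_num, ?_⟩
  intro lam _ _ f hf0 hf F hF M hM 𝓜 h𝓜 X Y hY hYX
  have hX : 0 < X := pos_of_mul_pos_right (a := (2 : ℝ) ^ M) (by linarith) (by positivity)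
  have hFexp : (fun x => (F x).re) = fun x => (expSum f lam x).re := by
    funext x
    rw [hF, expSum]
    congr! 3 with n
    rw [Real.fourierChar_apply]
    push_cast
    ring_nf
  set N := ⌈2 ^ M * X / Y⌉₊
  have hXY : 2 ^ M * X / Y ≤ N := Nat.le_ceil _
  have hN : 0 < N := Nat.ceil_pos.2 (zero_lt_one.trans ((one_lt_div (by linarith)).2 hYX))
  have hNY : 2 ^ M / (N : ℝ) ≤ Y / X := by
    rw [div_le_div_iff₀ (by positivity) hX]
    rw [div_le_iff₀ (by linarith)] at hXY
    linarith
  have hcore := half_sum_sub_le_sSup_re_expSum lam hf0 hf 𝓜 (by linarith) hYX.le hN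
  rw [h𝓜, show 2 * 2 ^ M * Y / (2 ^ M * X) = 2 * (Y / X) by field_simp] at hcore
  have hlog := three_div_ten_le_natCast_add_log hM (hY.trans hYX.le)
  have herr : 2 * (2 * (Y / X) + 2 ^ M / (N : ℝ)) ≤ 20 * (Y * (M + log X) / X) := by
    rw [show Y * (M + log X) / X = Y / X * (M + log X) by ring]
    nlinarith [div_nonneg (by linarith : (0 : ℝ) ≤ Y) hX.le]
  have hSM : 0 ≤ ∑ m ∈ 𝓜, f m := sum_nonneg fun m _ => hf0 m
  have hSf : 0 ≤ ∑' n, f n := tsum_nonneg hf0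
  rw [hFexp, ge_iff_le]
  linarith [mul_le_mul_of_nonneg_right herr hSf]
end

section
/- Let λ₁, ..., λ_N be real numbers linearly independent over ℚ, α₁, ..., α_N real, and F(x) = 1 + ∑_{n≤N} e^{−2πiα_n} e^{2πiλ_n x}. Then sup_{x ∈ ℝ} Re(F(x)) = N + 1. -/
/-!
Put θₙ(x) = 2π(λₙx − αₙ), so that Re F = 1 + ∑ cos θₙ, and consider
P = ∏ₙ (1 + cos θₙ)/2 = ∏ₙ |1 + e^{iθₙ}|²/4 ∈ [0, 1]. Expanding ∏ₙ (1 + e^{iθₙ})^k exhibits P^k as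
4^{-kN} |Q|² for a trigonometric polynomial Q whose frequencies ∑ aₙλₙ (0 ≤ aₙ ≤ k) are pairwise
distinct by linear independence. Parseval's identity for mean values then gives
mean(P^k) = 4^{-kN} (∑ⱼ C(k,j)²)^N ≥ (k+1)^{-N}. If P ≤ c < 1 everywhere, mean(P^k) ≤ c^k would
decay faster than that, so sup P = 1; finally N·P ≤ ∑ (1 + cos θₙ)/2 gives sup Re F = N + 1.
-/

set_option autoImplicit false

open Real

open Filter Finset Topology ComplexConjugate

lemma tendsto_average_exp_mul_I (ω : ℝ) :
    Tendsto (fun T : ℝ => (T : ℂ)⁻¹ * ∫ x in (0 : ℝ)..T, Complex.exp (ω * x * Complex.I))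
      atTop (𝓝 (if ω = 0 then 1 else 0)) := by
  split_ifs with hω
  · refine tendsto_const_nhds.congr' ?_
    filter_upwards [eventually_ne_atTop 0] with T hT
    simp [hω, hT]
  have hc : (ω : ℂ) * Complex.I ≠ 0 :=
    mul_ne_zero (Complex.ofReal_ne_zero.2 hω) Complex.I_ne_zero
  have hint (T : ℝ) : ∫ x in (0 : ℝ)..T, Complex.exp (ω * x * Complex.I)
      = (Complex.exp (↑(ω * T) * Complex.I) - 1) / (ω * Complex.I) := by
    simp_rw [mul_right_comm _ _ Complex.I, integral_exp_mul_complex hc]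
    rw [Complex.ofReal_zero, mul_zero, Complex.exp_zero]
    push_cast
    ring_nf
  have hbound : ∀ᶠ T : ℝ in atTop,
      ‖(T : ℂ)⁻¹ * ∫ x in (0 : ℝ)..T, Complex.exp (ω * x * Complex.I)‖ ≤ 2 / |ω| * T⁻¹ := by
    filter_upwards [eventually_gt_atTop 0] with T hT
    have hnum : ‖Complex.exp (↑(ω * T) * Complex.I) - 1‖ ≤ 2 := by
      refine (norm_sub_le _ _).trans ?_
      rw [Complex.norm_exp_ofReal_mul_I, norm_one]; norm_num
    rw [hint, norm_mul, norm_div, norm_inv, norm_mul, Complex.norm_I, mul_one,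
      Complex.norm_real, Complex.norm_real, norm_of_nonneg hT.le, Real.norm_eq_abs]
    calc T⁻¹ * (‖Complex.exp (↑(ω * T) * Complex.I) - 1‖ / |ω|)
        ≤ T⁻¹ * (2 / |ω|) := by gcongr
      _ = 2 / |ω| * T⁻¹ := mul_comm _ _
  exact squeeze_zero_norm' hbound (by simpa using tendsto_inv_atTop_zero.const_mul (2 / |ω|))

lemma ofReal_norm_sq_sum_mul_exp {ι : Type*} (s : Finset ι) (c : ι → ℂ) (ω : ι → ℝ) (x : ℝ) :
    ((‖∑ i ∈ s, c i * Complex.exp (ω i * x * Complex.I)‖ ^ 2 : ℝ) : ℂ)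
      = ∑ i ∈ s, ∑ j ∈ s, c i * conj (c j) * Complex.exp (↑(ω i - ω j) * x * Complex.I) := by
  rw [Complex.ofReal_pow, ← Complex.mul_conj', map_sum, sum_mul_sum]
  refine sum_congr rfl fun i _ => sum_congr rfl fun j _ => ?_
  rw [map_mul, ← Complex.exp_conj, map_mul, map_mul, Complex.conj_ofReal, Complex.conj_ofReal,
    Complex.conj_I]
  rw [show (↑(ω i - ω j) * x * Complex.I : ℂ) = ω i * x * Complex.I + (ω j * x * -Complex.I) by
    push_cast; ring, Complex.exp_add]
  ring

lemma tendsto_average_norm_sq_sum_mul_exp {ι : Type*} (s : Finset ι) (c : ι → ℂ) {ω : ι → ℝ}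
    (hω : Set.InjOn ω s) :
    Tendsto (fun T : ℝ =>
        T⁻¹ * ∫ x in (0 : ℝ)..T, ‖∑ i ∈ s, c i * Complex.exp (ω i * x * Complex.I)‖ ^ 2)
      atTop (𝓝 (∑ i ∈ s, ‖c i‖ ^ 2)) := by
  classical
  have hcont (i j : ι) :
      Continuous fun x : ℝ => c i * conj (c j) * Complex.exp (↑(ω i - ω j) * x * Complex.I) := by
    fun_prop
  have haverage (T : ℝ) :
      ((T⁻¹ * ∫ x in (0 : ℝ)..T, ‖∑ i ∈ s, c i * Complex.exp (ω i * x * Complex.I)‖ ^ 2 : ℝ) : ℂ)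
        = ∑ i ∈ s, ∑ j ∈ s, c i * conj (c j) *
            ((T : ℂ)⁻¹ * ∫ x in (0 : ℝ)..T, Complex.exp (↑(ω i - ω j) * x * Complex.I)) := by
    rw [Complex.ofReal_mul, ← intervalIntegral.integral_ofReal]
    simp_rw [ofReal_norm_sq_sum_mul_exp, Complex.ofReal_inv]
    rw [intervalIntegral.integral_finsetSum, mul_sum]
    · refine sum_congr rfl fun i _ => ?_
      rw [intervalIntegral.integral_finsetSum, mul_sum]
      · refine sum_congr rfl fun j _ => ?_
        rw [intervalIntegral.integral_const_mul]; ring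
      · exact fun j _ => (hcont i j).intervalIntegrable _ _
    · exact fun i _ => (continuous_finsetSum _ fun j _ => hcont i j).intervalIntegrable _ _
  have hlimit : ∑ i ∈ s, ∑ j ∈ s, c i * conj (c j) * (if ω i - ω j = 0 then 1 else 0)
      = ((∑ i ∈ s, ‖c i‖ ^ 2 : ℝ) : ℂ) := by
    push_cast
    refine sum_congr rfl fun i hi => ?_
    rw [← Complex.mul_conj', sum_eq_single_of_mem i hi fun j hj hji => ?_]
    · simp
    · rw [if_neg (sub_ne_zero.2 fun h => hji (hω hj hi h.symm)), mul_zero]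
  rw [← tendsto_ofReal_iff, ← hlimit, funext haverage]
  exact tendsto_finsetSum _ fun i _ => tendsto_finsetSum _ fun j _ =>
    (tendsto_average_exp_mul_I _).const_mul _

lemma four_pow_le_succ_mul_sum_choose_sq (k : ℕ) :
    4 ^ k ≤ (k + 1) * ∑ j ∈ range (k + 1), k.choose j ^ 2 := by
  have h := sq_sum_le_card_mul_sum_sq (s := range (k + 1)) (f := fun j => k.choose j)
  rwa [Nat.sum_range_choose, card_range, ← pow_mul, mul_comm, pow_mul] at h

lemma LinearIndependent.injective_sum_natCast_mul {ι : Type*} [Fintype ι] {v : ι → ℝ}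
    (hv : LinearIndependent ℚ v) : Function.Injective fun a : ι → ℕ => ∑ i, (a i : ℝ) * v i := by
  intro a b hab
  have h := Fintype.linearIndependent_iffₛ.1 hv (fun i => (a i : ℚ)) (fun i => (b i : ℚ))
    (by simpa [Rat.smul_def] using hab)
  exact funext fun i => by exact_mod_cast h i

lemma card_mul_prod_le_sum {ι R : Type*} [CommSemiring R] [PartialOrder R] [IsOrderedRing R]
    (s : Finset ι) {t : ι → R} (h0 : ∀ i ∈ s, 0 ≤ t i) (h1 : ∀ i ∈ s, t i ≤ 1) :
    #s * ∏ i ∈ s, t i ≤ ∑ i ∈ s, t i := by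
  classical
  rw [← nsmul_eq_mul, ← sum_const]
  refine sum_le_sum fun i hi => ?_
  rw [← mul_prod_erase s t hi]
  exact mul_le_of_le_one_right (h0 i hi)
    (prod_le_one (fun j hj => h0 j (mem_of_mem_erase hj)) fun j hj => h1 j (mem_of_mem_erase hj))

lemma prod_one_add_pow {ι R : Type*} [Fintype ι] [DecidableEq ι] [CommSemiring R] (z : ι → R)
    (k : ℕ) :
    ∏ i, (1 + z i) ^ k
      = ∑ a ∈ Fintype.piFinset fun _ => range (k + 1), ∏ i, (k.choose (a i) : R) * z i ^ a i := by
  simp_rw [add_comm (1 : R), add_pow, one_pow, mul_one]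
  rw [prod_univ_sum]
  simp_rw [mul_comm]

lemma one_add_cos_div_two_eq_norm_sq (θ : ℝ) :
    (1 + cos θ) / 2 = ‖1 + Complex.exp (θ * Complex.I)‖ ^ 2 / 4 := by
  rw [← Complex.normSq_eq_norm_sq, Complex.normSq_apply]
  simp only [Complex.add_re, Complex.add_im, Complex.one_re, Complex.one_im,
    Complex.exp_ofReal_mul_I_re, Complex.exp_ofReal_mul_I_im]
  nlinarith [sin_sq_add_cos_sq θ]

section RaisedCosProd

variable {ι : Type*} [Fintype ι]

noncomputable def raisedCosProd (ω β : ι → ℝ) (x : ℝ) : ℝ := ∏ i, (1 + cos (ω i * x + β i)) / 2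

lemma raisedCosProd_pow_eq [DecidableEq ι] (ω β : ι → ℝ) (k : ℕ) (x : ℝ) :
    raisedCosProd ω β x ^ k
      = ‖∑ a ∈ Fintype.piFinset fun _ => range (k + 1),
          (∏ i, (k.choose (a i) : ℂ) * Complex.exp (↑(a i * β i) * Complex.I)) *
            Complex.exp (↑(∑ i, a i * ω i) * x * Complex.I)‖ ^ 2 / 4 ^ (k * Fintype.card ι) := by
  have hterm (a : ι → ℕ) :
      ∏ i, (k.choose (a i) : ℂ) * Complex.exp (↑(ω i * x + β i) * Complex.I) ^ a i
        = (∏ i, (k.choose (a i) : ℂ) * Complex.exp (↑(a i * β i) * Complex.I)) *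
            Complex.exp (↑(∑ i, a i * ω i) * x * Complex.I) := by
    rw [Complex.ofReal_sum, sum_mul, sum_mul, Complex.exp_sum, ← prod_mul_distrib]
    refine prod_congr rfl fun i _ => ?_
    rw [← Complex.exp_nat_mul, mul_assoc, ← Complex.exp_add]
    push_cast
    ring_nf
  simp_rw [raisedCosProd, ← prod_pow, one_add_cos_div_two_eq_norm_sq, div_pow, prod_div_distrib,
    prod_const, ← pow_mul]
  rw [card_univ]
  congr 1
  simp_rw [← hterm, ← prod_one_add_pow, norm_prod, norm_pow, ← prod_pow, ← pow_mul, mul_comm k 2]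

lemma continuous_raisedCosProd (ω β : ι → ℝ) : Continuous (raisedCosProd ω β) := by
  unfold raisedCosProd; fun_prop

lemma tendsto_average_raisedCosProd_pow {ω : ι → ℝ}
    (hω : Function.Injective fun a : ι → ℕ => ∑ i, (a i : ℝ) * ω i) (β : ι → ℝ) (k : ℕ) :
    Tendsto (fun T : ℝ => T⁻¹ * ∫ x in (0 : ℝ)..T, raisedCosProd ω β x ^ k) atTop
      (𝓝 ((∑ j ∈ range (k + 1), (k.choose j : ℝ) ^ 2) ^ Fintype.card ι /
        4 ^ (k * Fintype.card ι))) := by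
  classical
  have hnorm (a : ι → ℕ) :
      ‖∏ i, (k.choose (a i) : ℂ) * Complex.exp (↑(a i * β i) * Complex.I)‖ ^ 2
        = ∏ i, (k.choose (a i) : ℝ) ^ 2 := by
    simp only [norm_prod, norm_mul, Complex.norm_exp_ofReal_mul_I, Complex.norm_natCast, mul_one,
      prod_pow]
  have hmean := (tendsto_average_norm_sq_sum_mul_exp
    (Fintype.piFinset fun _ : ι => range (k + 1)) (fun a => ∏ i, (k.choose (a i) : ℂ) * Complex.exp (↑(a i * β i) * Complex.I))
    hω.injOn).div_const (4 ^ (k * Fintype.card ι))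
  have hsum :
      ∑ a ∈ Fintype.piFinset (fun _ : ι => range (k + 1)), ∏ i, (k.choose (a i) : ℝ) ^ 2
        = (∑ j ∈ range (k + 1), (k.choose j : ℝ) ^ 2) ^ Fintype.card ι := by
    rw [← prod_univ_sum (fun _ => range (k + 1)) fun _ j => (k.choose j : ℝ) ^ 2, prod_const,
      card_univ]
  simp only [hnorm, hsum] at hmean
  refine hmean.congr fun T => ?_
  rw [mul_div_assoc, ← intervalIntegral.integral_div]
  simp_rw [raisedCosProd_pow_eq]

lemma exists_lt_raisedCosProd {ω : ι → ℝ}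
    (hω : Function.Injective fun a : ι → ℕ => ∑ i, (a i : ℝ) * ω i)
    (β : ι → ℝ) {c : ℝ} (hc : c < 1) : ∃ x, c < raisedCosProd ω β x := by
  by_contra! hle
  set N := Fintype.card ι
  have hnonneg (x : ℝ) : 0 ≤ raisedCosProd ω β x :=
    prod_nonneg fun i _ => by linarith [neg_one_le_cos (ω i * x + β i)]
  have hc0 : 0 ≤ c := (hnonneg 0).trans (hle 0)
  have hgrowth (k : ℕ) : 1 ≤ ((k : ℝ) + 1) ^ N * c ^ k := by
    have hmean : (∑ j ∈ range (k + 1), (k.choose j : ℝ) ^ 2) ^ N / 4 ^ (k * N) ≤ c ^ k := by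
      refine le_of_tendsto (tendsto_average_raisedCosProd_pow hω β k) ?_
      filter_upwards [eventually_gt_atTop 0] with T hT
      rw [inv_mul_le_iff₀ hT]
      calc ∫ x in (0 : ℝ)..T, raisedCosProd ω β x ^ k ≤ ∫ _ in (0 : ℝ)..T, c ^ k :=
            intervalIntegral.integral_mono_on hT.le
              (((continuous_raisedCosProd ω β).pow k).intervalIntegrable _ _)
              intervalIntegrable_const fun x _ => pow_le_pow_left₀ (hnonneg x) (hle x) k
        _ = T * c ^ k := by simp
    have hbinom : (4 : ℝ) ^ k ≤ (k + 1) * ∑ j ∈ range (k + 1), (k.choose j : ℝ) ^ 2 := by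
      exact_mod_cast four_pow_le_succ_mul_sum_choose_sq k
    rw [div_le_iff₀ (by positivity), pow_mul] at hmean
    refine le_of_mul_le_mul_left ?_ (by positivity : (0 : ℝ) < (4 ^ k) ^ N)
    calc ((4 : ℝ) ^ k) ^ N * 1 ≤ ((k + 1) * ∑ j ∈ range (k + 1), (k.choose j : ℝ) ^ 2) ^ N := by
          rw [mul_one]; gcongr
      _ ≤ ((k : ℝ) + 1) ^ N * (c ^ k * (4 ^ k) ^ N) := by rw [mul_pow]; gcongr
      _ = (4 ^ k) ^ N * (((k : ℝ) + 1) ^ N * c ^ k) := by ring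
  have hlim := (tendsto_pow_const_mul_const_pow_of_abs_lt_one N
    (by rwa [abs_of_nonneg hc0] : |c| < 1)).comp (tendsto_add_atTop_nat 1)
  have hc_le : c ≤ 0 := ge_of_tendsto hlim (Eventually.of_forall fun k => by
    have := mul_le_mul_of_nonneg_left (hgrowth k) hc0
    simp only [Function.comp_apply, Nat.cast_add, Nat.cast_one, pow_succ]
    linarith)
  have h1 := hgrowth 1
  rw [le_antisymm hc_le hc0] at h1
  norm_num at h1

lemma card_mul_raisedCosProd_le (ω β : ι → ℝ) (x : ℝ) :
    Fintype.card ι * raisedCosProd ω β x ≤ ∑ i, (1 + cos (ω i * x + β i)) / 2 :=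
  card_mul_prod_le_sum _ (fun i _ => by linarith [neg_one_le_cos (ω i * x + β i)])
    fun i _ => by linarith [cos_le_one (ω i * x + β i)]

lemma exists_lt_sum_cos {ω : ι → ℝ}
    (hω : Function.Injective fun a : ι → ℕ => ∑ i, (a i : ℝ) * ω i)
    (β : ι → ℝ) {w : ℝ} (hw : w < Fintype.card ι) : ∃ x, w < ∑ i, cos (ω i * x + β i) := by
  set N : ℝ := (Fintype.card ι : ℝ)
  -- chosen so that `c < 1` and `2 N c - N ≥ w`
  obtain ⟨x, hx⟩ := exists_lt_raisedCosProd hω β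
    (c := 1 - (N - w) / (2 * N + 1)) (sub_lt_self _ (by positivity))
  refine ⟨x, ?_⟩
  have h := card_mul_raisedCosProd_le ω β x
  rw [← sum_div, sum_add_distrib, sum_const, card_univ, nsmul_one] at h
  have hq : (N - w) / (2 * N + 1) * (2 * N + 1) = N - w := div_mul_cancel₀ _ (by positivity)
  have hqpos : 0 < (N - w) / (2 * N + 1) := by positivity
  nlinarith [mul_le_mul_of_nonneg_left hx.le (by positivity : (0 : ℝ) ≤ N)]

end RaisedCosProd

theorem bohr_jessen_sup (N : ℕ) (lam : Fin N → ℝ)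
    (hind : LinearIndependent ℚ lam) (α : Fin N → ℝ)
    (F : ℝ → ℂ)
    (hF : ∀ x : ℝ, F x = 1 + ∑ n : Fin N,
        Complex.exp (-(2 * π * Complex.I * α n)) * Complex.exp (2 * π * Complex.I * lam n * x)) :
    (⨆ x : ℝ, (F x).re) = (N : ℝ) + 1 := by
  have hRe (x : ℝ) : (F x).re = 1 + ∑ n, cos (2 * π * lam n * x + -(2 * π * α n)) := by
    rw [hF, Complex.add_re, Complex.one_re, Complex.re_sum]
    congr 1
    refine sum_congr rfl fun n _ => ?_
    rw [← Complex.exp_add, ← Complex.exp_ofReal_mul_I_re]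
    congr 2
    push_cast
    ring
  have hinj : Function.Injective fun a : Fin N → ℕ => ∑ n, (a n : ℝ) * (2 * π * lam n) := by
    intro a b hab
    simp only [mul_left_comm _ (2 * π), ← mul_sum] at hab
    exact hind.injective_sum_natCast_mul (mul_left_cancel₀ two_pi_pos.ne' hab)
  refine ciSup_eq_of_forall_le_of_forall_lt_exists_gt (fun x => ?_) fun w hw => ?_
  · have h := sum_le_card_nsmul univ (fun n => cos (2 * π * lam n * x + -(2 * π * α n))) 1
      fun n _ => cos_le_one _
    simp only [card_univ, Fintype.card_fin, nsmul_one] at h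
    rw [hRe]
    linarith
  · obtain ⟨x, hx⟩ := exists_lt_sum_cos hinj (fun n => -(2 * π * α n)) (w := w - 1)
      (by rw [Fintype.card_fin]; linarith)
    exact ⟨x, by rw [hRe]; linarith⟩
end

section
/- Kronecker's theorem: if λ₁, ..., λ_N are real numbers linearly independent over ℚ, then for any real α₁, ..., α_N and any ε > 0 there exists x₀ ∈ ℝ with ‖x₀λ_n − α_n‖ < ε for all n ≤ N. -/
/-!
Bohr's argument. Put `λ₀ = α₀ = 0` and `φ(x) = ∑ₙ exp (i (x λₙ - 2π αₙ))`, a sum of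
`N + 1` unit vectors. Its `p`-th power is an exponential polynomial with multinomial
coefficients and frequencies `∑ kₙ λₙ`, which are pairwise distinct by linear independence.
For such a polynomial `f = ∑ aₖ exp (i μₖ x)` one has `∫₀ᵀ |f|² = T ∑ |aₖ|² + O(1)`, hence
`sup |f|² ≥ ∑ |aₖ|²`. By Cauchy–Schwarz this gives
`sup |φ|^{2p} ≥ (N + 1)^{2p} / (p + 1)^{N + 1}`, and letting `p → ∞`, `sup |φ| = N + 1`.
A value of `|φ|` close to `N + 1` forces every term close to the term `1` of index `0`,
i.e. `x λₙ - 2π αₙ` close to `2πℤ`.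
-/

open Complex Finset Real ComplexConjugate Filter

lemma norm_integral_exp_mul_I_le {δ : ℝ} (hδ : δ ≠ 0) (T : ℝ) :
    ‖∫ x in (0 : ℝ)..T, cexp (δ * x * I)‖ ≤ 2 / |δ| := by
  have hc : (δ * I : ℂ) ≠ 0 := mul_ne_zero (ofReal_ne_zero.2 hδ) I_ne_zero
  simp_rw [mul_right_comm _ _ I]
  rw [integral_exp_mul_complex hc, norm_div, norm_mul, norm_I, mul_one, norm_real,
    Real.norm_eq_abs]
  gcongr
  calc _ ≤ ‖cexp ((δ * T : ℝ) * I)‖ + ‖cexp ((δ * 0 : ℝ) * I)‖ := by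
        push_cast; rw [mul_right_comm _ _ I, mul_right_comm _ _ I]; exact norm_sub_le _ _
    _ = 2 := by rw [norm_exp_ofReal_mul_I, norm_exp_ofReal_mul_I]; norm_num

section ExpPolynomial

variable {ι : Type*} (s : Finset ι) (a : ι → ℂ) (μ : ι → ℝ)

lemma ofReal_norm_sum_exp_sq (x : ℝ) :
    ((‖∑ k ∈ s, a k * cexp (μ k * x * I)‖ ^ 2 : ℝ) : ℂ) =
      ∑ k ∈ s, ∑ l ∈ s, a k * conj (a l) * cexp ((μ k - μ l : ℝ) * x * I) := by
  rw [ofReal_pow, ← mul_conj', map_sum, sum_mul_sum]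
  refine sum_congr rfl fun k _ => sum_congr rfl fun l _ => ?_
  rw [map_mul, ← exp_conj]
  simp only [map_mul, conj_ofReal, conj_I]
  rw [mul_mul_mul_comm, ← Complex.exp_add]
  push_cast
  ring_nf

lemma integral_norm_sum_exp_sq (T : ℝ) :
    ((∫ x in (0 : ℝ)..T, ‖∑ k ∈ s, a k * cexp (μ k * x * I)‖ ^ 2 : ℝ) : ℂ) =
      ∑ k ∈ s, ∑ l ∈ s,
        a k * conj (a l) * ∫ x in (0 : ℝ)..T, cexp ((μ k - μ l : ℝ) * x * I) := by
  have hcont : ∀ k l,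
      Continuous fun x : ℝ => a k * conj (a l) * cexp ((μ k - μ l : ℝ) * x * I) :=
    fun k l => by fun_prop
  rw [← intervalIntegral.integral_ofReal]
  simp_rw [ofReal_norm_sum_exp_sq]
  rw [intervalIntegral.integral_finsetSum fun k _ =>
    (continuous_finsetSum _ fun l _ => hcont k l).intervalIntegrable _ _]
  refine sum_congr rfl fun k _ => ?_
  rw [intervalIntegral.integral_finsetSum fun l _ => (hcont k l).intervalIntegrable _ _]
  simp_rw [intervalIntegral.integral_const_mul]

lemma exists_abs_integral_norm_sum_exp_sq_sub_le (hμ : Set.InjOn μ s) :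
    ∃ C, ∀ T : ℝ, |(∫ x in (0 : ℝ)..T, ‖∑ k ∈ s, a k * cexp (μ k * x * I)‖ ^ 2) -
      (∑ k ∈ s, ‖a k‖ ^ 2) * T| ≤ C := by
  classical
  refine ⟨∑ k ∈ s, ∑ l ∈ s.erase k, ‖a k‖ * ‖a l‖ * (2 / |μ k - μ l|), fun T => ?_⟩
  have hdiag : ∀ k,
      a k * conj (a k) * ∫ x in (0 : ℝ)..T, cexp ((μ k - μ k : ℝ) * x * I) =
        ((‖a k‖ ^ 2 * T : ℝ) : ℂ) := fun k => by
    simp [mul_conj']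
  have hsplit : ((∫ x in (0 : ℝ)..T, ‖∑ k ∈ s, a k * cexp (μ k * x * I)‖ ^ 2 : ℝ) : ℂ) -
      (((∑ k ∈ s, ‖a k‖ ^ 2) * T : ℝ) : ℂ) = ∑ k ∈ s, ∑ l ∈ s.erase k,
        a k * conj (a l) * ∫ x in (0 : ℝ)..T, cexp ((μ k - μ l : ℝ) * x * I) := by
    rw [integral_norm_sum_exp_sq, sub_eq_iff_eq_add', sum_mul, ofReal_sum,
      ← sum_add_distrib]
    refine sum_congr rfl fun k hk => ?_
    rw [← add_sum_erase _ _ hk, hdiag]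
  rw [← Real.norm_eq_abs, ← Complex.norm_real, ofReal_sub, hsplit]
  refine (norm_sum_le _ _).trans (sum_le_sum fun k hk => (norm_sum_le _ _).trans
    (sum_le_sum fun l hl => ?_))
  have hμkl : μ k - μ l ≠ 0 :=
    sub_ne_zero.2 fun h => (ne_of_mem_erase hl) (hμ (mem_of_mem_erase hl) hk h.symm)
  rw [norm_mul, norm_mul, RCLike.norm_conj]
  gcongr
  exact norm_integral_exp_mul_I_le hμkl T

lemma sum_norm_sq_le_sq_of_norm_sum_exp_le (hμ : Set.InjOn μ s) {M : ℝ}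
    (hM : ∀ x : ℝ, ‖∑ k ∈ s, a k * cexp (μ k * x * I)‖ ≤ M) :
    ∑ k ∈ s, ‖a k‖ ^ 2 ≤ M ^ 2 := by
  obtain ⟨C, hC⟩ := exists_abs_integral_norm_sum_exp_sq_sub_le s a μ hμ
  have hC0 : 0 ≤ C := (abs_nonneg _).trans (hC 0)
  have hbound : ∀ T ≥ 0, (∑ k ∈ s, ‖a k‖ ^ 2 - M ^ 2) * T ≤ C := by
    intro T hT
    have hcont : Continuous fun x : ℝ => ‖∑ k ∈ s, a k * cexp (μ k * x * I)‖ ^ 2 := by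
      fun_prop
    have hupper : ∫ x in (0 : ℝ)..T, ‖∑ k ∈ s, a k * cexp (μ k * x * I)‖ ^ 2 ≤ T * M ^ 2 := by
      simpa using intervalIntegral.integral_mono_on hT
        (hcont.intervalIntegrable (μ := MeasureTheory.volume) _ _) intervalIntegrable_const
        fun x _ => pow_le_pow_left₀ (norm_nonneg _) (hM x) 2
    linarith [(abs_le.1 (hC T)).1]
  by_contra! h
  have hpos : 0 < ∑ k ∈ s, ‖a k‖ ^ 2 - M ^ 2 := sub_pos.2 h
  have := hbound ((C + 1) / (∑ k ∈ s, ‖a k‖ ^ 2 - M ^ 2)) (by positivity)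
  rw [mul_div_cancel₀ _ hpos.ne'] at this
  linarith

end ExpPolynomial

lemma exists_succ_pow_mul_pow_lt_one (d : ℕ) {r : ℝ} (hr : 0 ≤ r) (hr1 : r < 1) :
    ∃ p : ℕ, ((p : ℝ) + 1) ^ d * r ^ p < 1 := by
  obtain ⟨p, hp1, hp⟩ := ((eventually_ge_atTop 1).and
    ((tendsto_pow_const_mul_const_pow_of_lt_one d hr hr1).eventually
      (gt_mem_nhds (by positivity : (0 : ℝ) < (2 ^ d)⁻¹)))).exists
  refine ⟨p, ?_⟩
  have hp1' : (1 : ℝ) ≤ p := by exact_mod_cast hp1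
  calc ((p : ℝ) + 1) ^ d * r ^ p ≤ (2 * p) ^ d * r ^ p := by gcongr; linarith
    _ = 2 ^ d * ((p : ℝ) ^ d * r ^ p) := by ring
    _ < 2 ^ d * (2 ^ d)⁻¹ := by gcongr
    _ = 1 := mul_inv_cancel₀ (by positivity)

section ExponentialSum

variable {ι : Type*} [Fintype ι] [DecidableEq ι]

lemma card_piAntidiag_univ_le (p : ℕ) :
    #(piAntidiag (univ : Finset ι) p) ≤ (p + 1) ^ Fintype.card ι := by
  calc #(piAntidiag (univ : Finset ι) p)
      ≤ #(Fintype.piFinset fun _ : ι => range (p + 1)) := by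
        refine card_le_card fun k hk => Fintype.mem_piFinset.2 fun i => mem_range.2 ?_
        rw [mem_piAntidiag] at hk
        exact Nat.lt_succ_of_le
          (hk.1 ▸ single_le_sum (fun j _ => Nat.zero_le (k j)) (mem_univ i))
    _ = (p + 1) ^ Fintype.card ι := by simp

lemma sum_multinomial_piAntidiag_univ (p : ℕ) :
    ∑ k ∈ piAntidiag (univ : Finset ι) p, Nat.multinomial univ k = Fintype.card ι ^ p := by
  simpa using (sum_pow_eq_sum_piAntidiag (univ : Finset ι) (fun _ => (1 : ℕ)) p).symm

lemma sum_exp_pow (β γ : ι → ℝ) (x : ℝ) (p : ℕ) :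
    (∑ i, cexp ((x * β i - γ i : ℝ) * I)) ^ p =
      ∑ k ∈ piAntidiag univ p, (Nat.multinomial univ k * cexp ((-∑ i, k i * γ i : ℝ) * I)) *
        cexp ((∑ i, k i * β i : ℝ) * x * I) := by
  rw [sum_pow_eq_sum_piAntidiag]
  refine sum_congr rfl fun k _ => ?_
  simp_rw [← Complex.exp_nat_mul, ← Complex.exp_sum, mul_assoc, ← Complex.exp_add]
  congr 2
  push_cast
  rw [neg_mul, sum_mul, sum_mul, ← sum_neg_distrib, ← sum_add_distrib]
  exact sum_congr rfl fun i _ => by ring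

theorem exists_lt_norm_sum_exp {β : ι → ℝ} (γ : ι → ℝ)
    (hβ : ∀ p, Set.InjOn (fun k : ι → ℕ => ∑ i, (k i : ℝ) * β i)
      ((piAntidiag univ p : Finset (ι → ℕ)) : Set (ι → ℕ)))
    {M : ℝ} (hM : M < Fintype.card ι) :
    ∃ x : ℝ, M < ‖∑ i, cexp ((x * β i - γ i : ℝ) * I)‖ := by
  by_contra! hφ
  have hM0 : 0 ≤ M := (norm_nonneg _).trans (hφ 0)
  set n := Fintype.card ι
  have hn : (0 : ℝ) < n := hM0.trans_lt hM
  obtain ⟨p, hp⟩ := exists_succ_pow_mul_pow_lt_one n (r := (M / n) ^ 2) (by positivity)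
    (by rw [sq_lt_one_iff₀ (by positivity), div_lt_one hn]; exact hM)
  set K := piAntidiag (univ : Finset ι) p
  have hsq : ∑ k ∈ K, (Nat.multinomial univ k : ℝ) ^ 2 ≤ (M ^ p) ^ 2 := by
    have := sum_norm_sq_le_sq_of_norm_sum_exp_le K _ _ (hβ p) fun x => by
      rw [← sum_exp_pow, norm_pow]
      exact pow_le_pow_left₀ (norm_nonneg _) (hφ x) p
    simpa only [norm_mul, norm_exp_ofReal_mul_I, mul_one, Complex.norm_natCast] using this
  have hcs : ((n : ℝ) ^ p) ^ 2 ≤ #K * ∑ k ∈ K, (Nat.multinomial univ k : ℝ) ^ 2 := by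
    have := sq_sum_le_card_mul_sum_sq (s := K) (f := fun k => (Nat.multinomial univ k : ℝ))
    rwa [← Nat.cast_sum, sum_multinomial_piAntidiag_univ, Nat.cast_pow] at this
  have hK : (#K : ℝ) ≤ (p + 1) ^ n := by exact_mod_cast card_piAntidiag_univ_le p
  have hsum : 0 ≤ ∑ k ∈ K, (Nat.multinomial univ k : ℝ) ^ 2 := by positivity
  have := calc ((n : ℝ) ^ p) ^ 2
      ≤ #K * ∑ k ∈ K, (Nat.multinomial univ k : ℝ) ^ 2 := hcs
    _ ≤ ((p : ℝ) + 1) ^ n * (M ^ p) ^ 2 := mul_le_mul hK hsq hsum (by positivity)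
    _ = ((p : ℝ) + 1) ^ n * ((M / n) ^ 2) ^ p * ((n : ℝ) ^ p) ^ 2 := by
      rw [div_pow, div_pow]; field_simp; ring
    _ < ((n : ℝ) ^ p) ^ 2 := mul_lt_of_lt_one_left (by positivity) hp
  exact lt_irrefl _ this

end ExponentialSum

lemma injOn_sum_mul_cons_zero {N : ℕ} {lam : Fin N → ℝ} (hlam : LinearIndependent ℚ lam)
    (p : ℕ) :
    Set.InjOn (fun k : Fin (N + 1) → ℕ => ∑ i, (k i : ℝ) * (Fin.cons 0 lam : Fin (N + 1) → ℝ) i)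
      ((piAntidiag univ p : Finset (Fin (N + 1) → ℕ)) : Set (Fin (N + 1) → ℕ)) := by
  intro k hk l hl hkl
  simp only [Fin.sum_univ_succ, Fin.cons_zero, Fin.cons_succ, mul_zero, zero_add] at hkl
  have htail : ∀ i : Fin N, k i.succ = l i.succ :=
    Fintype.linearIndependent_iffₛ.1 (hlam.restrict_scalars' ℕ) _ _
      (by simpa [nsmul_eq_mul] using hkl)
  have hsum : ∑ i, k i = ∑ i, l i :=
    (mem_piAntidiag.1 hk).1.trans (mem_piAntidiag.1 hl).1.symm
  rw [Fin.sum_univ_succ, Fin.sum_univ_succ, sum_congr rfl fun i _ => htail i] at hsum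
  exact funext (Fin.cases (by omega) htail)

lemma two_sub_lt_norm_add_of_card_sub_lt_norm_sum {E ι : Type*} [SeminormedAddCommGroup E]
    [Fintype ι] {z : ι → E} (hz : ∀ i, ‖z i‖ ≤ 1) {i j : ι} (hij : i ≠ j) {η : ℝ}
    (h : Fintype.card ι - η < ‖∑ k, z k‖) : 2 - η < ‖z i + z j‖ := by
  classical
  set rest := (univ.erase i).erase j
  have hj : j ∈ univ.erase i := mem_erase.2 ⟨hij.symm, mem_univ j⟩
  have hcard : (#rest : ℝ) + 2 = Fintype.card ι := by
    rw [← card_univ, ← card_erase_add_one (mem_univ i), ← card_erase_add_one hj]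
    push_cast; ring
  have hrest : ‖∑ k ∈ rest, z k‖ ≤ #rest :=
    (norm_sum_le _ _).trans (by simpa using sum_le_sum fun k (_ : k ∈ rest) => hz k)
  rw [← add_sum_erase _ _ (mem_univ i), ← add_sum_erase _ _ hj, ← add_assoc] at h
  linarith [norm_add_le (z i + z j) (∑ k ∈ rest, z k)]

lemma norm_one_add_exp_mul_I_sq (t : ℝ) : ‖1 + cexp (t * I)‖ ^ 2 = 2 + 2 * Real.cos t := by
  rw [Complex.sq_norm, normSq_add, normSq_one, ← Complex.sq_norm, norm_exp_ofReal_mul_I,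
    one_mul, ← exp_conj, map_mul, conj_ofReal, conj_I, mul_neg, ← neg_mul, ← ofReal_neg,
    exp_ofReal_mul_I_re, Real.cos_neg]
  ring

lemma abs_sub_round_lt_of_cos_lt {θ ε : ℝ} (hε : 0 ≤ ε)
    (h : Real.cos (2 * π * ε) < Real.cos (2 * π * θ)) : |θ - round θ| < ε := by
  have hcos : Real.cos (2 * π * θ) = Real.cos (2 * π * |θ - round θ|) := by
    rw [mul_comm _ |_|, ← abs_of_pos two_pi_pos, ← abs_mul, Real.cos_abs, abs_of_pos two_pi_pos,
      sub_mul, Real.cos_sub_int_mul_two_pi, mul_comm]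
  by_contra! hge
  refine h.not_ge (hcos ▸ Real.cos_le_cos_of_nonneg_of_le_pi (by positivity) ?_ (by gcongr))
  nlinarith [abs_sub_round θ, pi_pos]

theorem kronecker_approximation (N : ℕ) (lam : Fin N → ℝ)
    (hind : LinearIndependent ℚ lam) (α : Fin N → ℝ) (ε : ℝ) (hε : 0 < ε) :
    ∃ x₀ : ℝ, ∀ n : Fin N,
      |x₀ * lam n - α n - round (x₀ * lam n - α n)| < ε := by
  set δ := min ε (1 / 2)
  have hδ : 0 < δ := lt_min hε one_half_pos
  set c := Real.cos (2 * π * δ)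
  have hc : c < 1 := by
    simpa using Real.cos_lt_cos_of_nonneg_of_le_pi le_rfl
      (by nlinarith [min_le_right ε (1 / 2), pi_pos]) (by positivity : 0 < 2 * π * δ)
  -- `(1 - c) / 2` is the margin for which `2 - (1 - c) / 2 < ‖1 + exp (i θ)‖` forces `c < cos θ`
  obtain ⟨x, hx⟩ := exists_lt_norm_sum_exp (β := Fin.cons 0 lam)
    (Fin.cons 0 fun n => 2 * π * α n) (injOn_sum_mul_cons_zero hind)
    (M := Fintype.card (Fin (N + 1)) - (1 - c) / 2) (by linarith)
  refine ⟨x / (2 * π), fun n => ?_⟩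
  set θ := x / (2 * π) * lam n - α n
  have hpair := two_sub_lt_norm_add_of_card_sub_lt_norm_sum
    (fun i => (norm_exp_ofReal_mul_I _).le) (Fin.succ_ne_zero n).symm hx
  simp only [Fin.cons_zero, Fin.cons_succ, mul_zero, sub_zero, ofReal_zero, zero_mul,
    Complex.exp_zero] at hpair
  rw [show x * lam n - 2 * π * α n = 2 * π * θ by simp only [θ]; field_simp] at hpair
  have hcos : c < Real.cos (2 * π * θ) := by
    have hc1 : -1 ≤ c := Real.neg_one_le_cos _
    nlinarith [norm_one_add_exp_mul_I_sq (2 * π * θ),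
      pow_lt_pow_left₀ hpair (by linarith) two_ne_zero]
  exact (abs_sub_round_lt_of_cos_lt hδ.le hcos).trans_le (min_le_left _ _)
end

section
/- Let λ₁, ..., λ_N be linearly independent over ℚ, α₁, ..., α_N real, F(x) = 1 + ∑_{n≤N} e^{−2πiα_n} e^{2πiλ_n x}, and W_L(x) = ∏_{n≤N} K_L(xλ_n − α_n) with K_L the Fejér polynomial. Then the mean value lim_{T→∞} (1/2T) ∫_{−T}^{T} F(x) W_L(x) dx = 1 + N(L−1)/L, and lim_{T→∞} (1/2T) ∫_{−T}^{T} W_L(x) dx = 1. -/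
/-!
Expanding the product of Fejér kernels, `W` is a trigonometric polynomial
`∑ₚ aₚ e(⟨p, λ⟩ x)` over integer vectors `p ∈ [-L, L]ᴺ`, with
`aₚ = ∏ₙ (1 - |pₙ|/L) e(-pₙ αₙ)`. The mean value of `e(μ x)` is `1` for `μ = 0` and `0` otherwise,
so the mean of `e(⟨q, λ⟩ x) W(x)` is the sum of the `aₚ` with `⟨q + p, λ⟩ = 0`, and by linear
independence only `p = -q` qualifies. For `q = 0` this gives the mean `1` of `W`; for `q` the
`m`-th unit vector it gives `(1 - 1/L) e(αₘ)`, which the coefficient `e(-αₘ)` of `F` cancels.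
-/

set_option autoImplicit false

open Real Filter MeasureTheory Topology

noncomputable section

def expFreq (μ x : ℝ) : ℂ := Complex.exp (2 * π * Complex.I * μ * x)

@[fun_prop]
lemma continuous_expFreq (μ : ℝ) : Continuous (expFreq μ) := by
  unfold expFreq; fun_prop

lemma expFreq_zero_left (x : ℝ) : expFreq 0 x = 1 := by simp [expFreq]

lemma expFreq_mul_expFreq (μ ν x : ℝ) : expFreq μ x * expFreq ν x = expFreq (μ + ν) x := by
  rw [expFreq, expFreq, expFreq, ← Complex.exp_add]
  push_cast
  ring_nf

lemma prod_expFreq {ι : Type*} (s : Finset ι) (μ : ι → ℝ) (x : ℝ) :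
    ∏ i ∈ s, expFreq (μ i) x = expFreq (∑ i ∈ s, μ i) x := by
  simp only [expFreq, ← Complex.exp_sum]
  push_cast
  rw [Finset.mul_sum, Finset.sum_mul]

def HasMeanValue (f : ℝ → ℂ) (m : ℂ) : Prop :=
  Tendsto (fun T : ℝ => (1 / (2 * T) : ℂ) * ∫ x in (-T)..T, f x) atTop (𝓝 m)

lemma hasMeanValue_const (c : ℂ) : HasMeanValue (fun _ => c) c := by
  refine tendsto_const_nhds.congr' ?_
  filter_upwards [eventually_gt_atTop 0] with T hT
  have hT' : (T : ℂ) ≠ 0 := by exact_mod_cast hT.ne'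
  rw [intervalIntegral.integral_const, Complex.real_smul]
  push_cast
  field_simp
  ring

lemma hasMeanValue_zero_of_norm_integral_le {f : ℝ → ℂ} (C : ℝ)
    (hC : ∀ T, ‖∫ x in (-T)..T, f x‖ ≤ C) : HasMeanValue f 0 := by
  have hdecay : Tendsto (fun T : ℝ => C / (2 * T)) atTop (𝓝 0) :=
    tendsto_const_nhds.div_atTop (tendsto_id.const_mul_atTop two_pos)
  refine squeeze_zero_norm' ?_ hdecay
  filter_upwards [eventually_gt_atTop 0] with T hT
  rw [norm_mul, norm_div, norm_one, norm_mul, Complex.norm_two, Complex.norm_real,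
    Real.norm_of_nonneg hT.le, div_mul_eq_mul_div, one_mul]
  gcongr
  exact hC T

lemma hasMeanValue_expFreq_of_ne_zero {μ : ℝ} (hμ : μ ≠ 0) : HasMeanValue (expFreq μ) 0 := by
  set c : ℂ := 2 * π * Complex.I * μ
  have hc : c ≠ 0 := by simp [c, Real.pi_ne_zero, hμ]
  have hnorm : ∀ x : ℝ, ‖Complex.exp (c * x)‖ = 1 := fun x => by
    rw [Complex.norm_exp]; simp [c]
  refine hasMeanValue_zero_of_norm_integral_le (2 / ‖c‖) fun T => ?_
  have hint : ∫ x in (-T)..T, expFreq μ x =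
      (Complex.exp (c * T) - Complex.exp (c * (-T : ℝ))) / c :=
    integral_exp_mul_complex hc
  rw [hint, norm_div]
  gcongr
  calc _ ≤ ‖Complex.exp (c * T)‖ + ‖Complex.exp (c * (-T : ℝ))‖ := norm_sub_le _ _
    _ = 2 := by rw [hnorm, hnorm]; norm_num

lemma hasMeanValue_expFreq (μ : ℝ) : HasMeanValue (expFreq μ) (if μ = 0 then 1 else 0) := by
  split_ifs with hμ
  · rw [hμ, show expFreq 0 = fun _ => 1 from funext expFreq_zero_left]
    exact hasMeanValue_const 1
  · exact hasMeanValue_expFreq_of_ne_zero hμ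

lemma HasMeanValue.const_mul {f : ℝ → ℂ} {m : ℂ} (hf : HasMeanValue f m) (c : ℂ) :
    HasMeanValue (fun x => c * f x) (c * m) := by
  refine (Tendsto.const_mul c hf).congr fun T => ?_
  rw [intervalIntegral.integral_const_mul]
  ring

lemma HasMeanValue.add {f g : ℝ → ℂ} {a b : ℂ} (hf : HasMeanValue f a) (hg : HasMeanValue g b)
    (hfc : Continuous f) (hgc : Continuous g) : HasMeanValue (fun x => f x + g x) (a + b) := by
  refine (Tendsto.add hf hg).congr fun T => ?_
  rw [intervalIntegral.integral_add (hfc.intervalIntegrable _ _) (hgc.intervalIntegrable _ _)]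
  ring

lemma hasMeanValue_finsetSum {ι : Type*} (s : Finset ι) {f : ι → ℝ → ℂ} {m : ι → ℂ}
    (hf : ∀ i ∈ s, HasMeanValue (f i) (m i)) (hfc : ∀ i ∈ s, Continuous (f i)) :
    HasMeanValue (fun x => ∑ i ∈ s, f i x) (∑ i ∈ s, m i) := by
  refine (tendsto_finsetSum s hf).congr fun T => ?_
  rw [intervalIntegral.integral_finsetSum fun i hi => (hfc i hi).intervalIntegrable _ _,
    Finset.mul_sum]

lemma hasMeanValue_trigSum {ι : Type*} (s : Finset ι) (c : ι → ℂ) (μ : ι → ℝ) :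
    HasMeanValue (fun x => ∑ i ∈ s, c i * expFreq (μ i) x) (∑ i ∈ s with μ i = 0, c i) := by
  rw [Finset.sum_filter]
  refine hasMeanValue_finsetSum s (fun i _ => ?_) (fun i _ => by fun_prop)
  convert (hasMeanValue_expFreq (μ i)).const_mul (c i) using 1
  split_ifs <;> simp

lemma hasMeanValue_expFreq_mul_trigSum {ι : Type*} (s : Finset ι) (c : ι → ℂ) (μ : ι → ℝ)
    (ν : ℝ) : HasMeanValue (fun x => expFreq ν x * ∑ i ∈ s, c i * expFreq (μ i) x)
      (∑ i ∈ s with ν + μ i = 0, c i) := by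
  convert hasMeanValue_trigSum s c (fun i => ν + μ i) using 2 with x
  rw [Finset.mul_sum]
  refine Finset.sum_congr rfl fun i _ => ?_
  rw [← expFreq_mul_expFreq]
  ring

def trigPoly (S : Finset ℤ) (c : ℤ → ℂ) (y : ℝ) : ℂ :=
  ∑ l ∈ S, c l * Complex.exp (2 * π * Complex.I * l * y)

@[fun_prop]
lemma continuous_trigPoly (S : Finset ℤ) (c : ℤ → ℂ) : Continuous (trigPoly S c) := by
  unfold trigPoly; fun_prop

def trigProdCoeff {ι : Type*} [Fintype ι] (c : ℤ → ℂ) (α : ι → ℝ) (p : ι → ℤ) : ℂ :=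
  ∏ n, c (p n) * Complex.exp (-(2 * π * Complex.I * p n * α n))

lemma prod_trigPoly_eq_sum {ι : Type*} [Fintype ι] [DecidableEq ι] (S : Finset ℤ) (c : ℤ → ℂ)
    (lam α : ι → ℝ) (x : ℝ) :
    ∏ n, trigPoly S c (x * lam n - α n) =
      ∑ p ∈ Fintype.piFinset fun _ => S,
        trigProdCoeff c α p * expFreq (Fintype.linearCombination ℤ lam p) x := by
  simp only [trigPoly, Finset.prod_univ_sum]
  refine Finset.sum_congr rfl fun p _ => ?_
  have hfactor : ∀ n, c (p n) * Complex.exp (2 * π * Complex.I * (p n : ℤ) *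
      ((x * lam n - α n : ℝ) : ℂ)) =
      c (p n) * Complex.exp (-(2 * π * Complex.I * p n * α n)) * expFreq (p n * lam n) x := by
    intro n
    rw [expFreq, mul_assoc _ (Complex.exp _), ← Complex.exp_add]
    push_cast
    ring_nf
  simp only [hfactor, Finset.prod_mul_distrib, prod_expFreq, trigProdCoeff,
    Fintype.linearCombination_apply, zsmul_eq_mul]

lemma trigProdCoeff_zero {ι : Type*} [Fintype ι] {c : ℤ → ℂ} (hc : c 0 = 1) (α : ι → ℝ) :
    trigProdCoeff c α 0 = 1 := by
  simp [trigProdCoeff, hc]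

lemma trigProdCoeff_neg_single {ι : Type*} [Fintype ι] [DecidableEq ι] {c : ℤ → ℂ}
    (hc : c 0 = 1) (α : ι → ℝ) (m : ι) :
    trigProdCoeff c α (-Pi.single m 1) = c (-1) * Complex.exp (2 * π * Complex.I * α m) := by
  rw [trigProdCoeff, Finset.prod_eq_single m]
  · simp
  · intro n _ hn
    simp [hn, hc]
  · simp

lemma sum_filter_linearCombination_add_eq_zero {ι M : Type*} [Fintype ι] [AddCommGroup M]
    [DecidableEq M] [Module ℚ M] {v : ι → M} (hv : LinearIndependent ℚ v)
    {P : Finset (ι → ℤ)} {q : ι → ℤ} (hq : -q ∈ P) (a : (ι → ℤ) → ℂ) :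
    ∑ p ∈ P with Fintype.linearCombination ℤ v q + Fintype.linearCombination ℤ v p = 0, a p
      = a (-q) := by
  have hinj := linearIndependent_iff_injective_fintypeLinearCombination.mp (hv.restrict_scalars' ℤ)
  have hfreq (p : ι → ℤ) :
      Fintype.linearCombination ℤ v q + Fintype.linearCombination ℤ v p = 0 ↔ -q = p := by
    rw [← map_add, map_eq_zero_iff _ hinj, add_eq_zero_iff_neg_eq]
  simp only [hfreq, Finset.sum_filter, Finset.sum_ite_eq, if_pos hq]

lemma hasMeanValue_expFreq_mul_prod_trigPoly {ι : Type*} [Fintype ι] [DecidableEq ι]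
    {lam : ι → ℝ} (hlam : LinearIndependent ℚ lam) (S : Finset ℤ) (c : ℤ → ℂ) (α : ι → ℝ)
    {q : ι → ℤ} (hq : -q ∈ Fintype.piFinset fun _ => S) :
    HasMeanValue (fun x => expFreq (Fintype.linearCombination ℤ lam q) x *
        ∏ n, trigPoly S c (x * lam n - α n)) (trigProdCoeff c α (-q)) := by
  simp only [prod_trigPoly_eq_sum]
  rw [← sum_filter_linearCombination_add_eq_zero hlam hq (trigProdCoeff c α)]
  exact hasMeanValue_expFreq_mul_trigSum _ _ _ _

section TrigProduct

variable {ι : Type*} [Fintype ι] [DecidableEq ι] {lam : ι → ℝ} {S : Finset ℤ} {c : ℤ → ℂ}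

lemma hasMeanValue_prod_trigPoly (hlam : LinearIndependent ℚ lam) (α : ι → ℝ) (hc : c 0 = 1)
    (hS : 0 ∈ S) :
    HasMeanValue (fun x => ∏ n, trigPoly S c (x * lam n - α n)) 1 := by
  simpa [expFreq_zero_left, trigProdCoeff_zero hc, hS] using
    hasMeanValue_expFreq_mul_prod_trigPoly hlam S c α (q := 0)

lemma hasMeanValue_mul_prod_trigPoly (hlam : LinearIndependent ℚ lam) (α : ι → ℝ) (hc : c 0 = 1)
    (hS : 0 ∈ S) (hS' : -1 ∈ S) :
    HasMeanValue (fun x => (1 + ∑ m, Complex.exp (-(2 * π * Complex.I * α m)) *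
        Complex.exp (2 * π * Complex.I * lam m * x)) * ∏ n, trigPoly S c (x * lam n - α n))
      (1 + Fintype.card ι * c (-1)) := by
  have hmeanF (m : ι) : HasMeanValue (fun x => Complex.exp (-(2 * π * Complex.I * α m)) *
      (expFreq (lam m) x * ∏ n, trigPoly S c (x * lam n - α n))) (c (-1)) := by
    have hmem : -Pi.single m (1 : ℤ) ∈ Fintype.piFinset fun _ => S := by
      simp only [Fintype.mem_piFinset]
      intro n
      rcases eq_or_ne n m with rfl | hn <;> simp [*]
    convert (hasMeanValue_expFreq_mul_prod_trigPoly hlam S c α hmem).const_mul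
      (Complex.exp (-(2 * π * Complex.I * α m))) using 1
    · simp
    · rw [trigProdCoeff_neg_single hc, mul_left_comm, ← Complex.exp_add, neg_add_cancel,
        Complex.exp_zero, mul_one]
  have hsum := (hasMeanValue_prod_trigPoly hlam α hc hS).add
    (hasMeanValue_finsetSum Finset.univ (fun m _ => hmeanF m) fun m _ => by fun_prop)
    (by fun_prop) (by fun_prop)
  simp only [Finset.sum_const, Finset.card_univ, nsmul_eq_mul] at hsum
  convert hsum using 2 with x
  simp only [add_mul, one_mul, Finset.sum_mul, mul_assoc, expFreq]

end TrigProduct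

end

theorem bohr_jessen_mean_values (N : ℕ) (lam : Fin N → ℝ)
    (hind : LinearIndependent ℚ lam) (α : Fin N → ℝ)
    (L : ℕ) (hL : 1 ≤ L)
    (K : ℝ → ℂ)
    (hK : ∀ y : ℝ, K y = ∑ l ∈ Finset.Icc (-(L : ℤ)) (L : ℤ),
        ((1 - |(l : ℝ)| / L : ℝ) : ℂ) * Complex.exp (2 * π * Complex.I * l * y))
    (F W : ℝ → ℂ)
    (hF : ∀ x : ℝ, F x = 1 + ∑ n : Fin N,
        Complex.exp (-(2 * π * Complex.I * α n)) * Complex.exp (2 * π * Complex.I * lam n * x))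
    (hW : ∀ x : ℝ, W x = ∏ n : Fin N, K (x * lam n - α n)) :
    Tendsto (fun T : ℝ => (1 / (2 * T)) * ∫ x in (-T)..T, F x * W x) atTop
        (nhds ((1 : ℂ) + N * (L - 1) / L)) ∧
    Tendsto (fun T : ℝ => (1 / (2 * T)) * ∫ x in (-T)..T, W x) atTop (nhds (1 : ℂ)) := by
  set c : ℤ → ℂ := fun l => ((1 - |(l : ℝ)| / L : ℝ) : ℂ)
  set S := Finset.Icc (-(L : ℤ)) L
  have hc : c 0 = 1 := by simp [c]
  have hS : (0 : ℤ) ∈ S := by simp [S]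
  have hS' : (-1 : ℤ) ∈ S := by simp [S, hL]
  have hWprod : W = fun x => ∏ n, trigPoly S c (x * lam n - α n) := by
    funext x
    rw [hW, show K = trigPoly S c from funext hK]
  have hFW : (fun x => F x * W x) = fun x : ℝ =>
      (1 + ∑ m, Complex.exp (-(2 * π * Complex.I * α m)) *
        Complex.exp (2 * π * Complex.I * lam m * x)) * ∏ n, trigPoly S c (x * lam n - α n) := by
    simp only [hF, hWprod]
  have hvalue : (1 : ℂ) + Fintype.card (Fin N) * c (-1) = 1 + N * (L - 1) / L := by
    have hL0 : (L : ℂ) ≠ 0 := by exact_mod_cast (by omega : L ≠ 0)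
    simp only [c, Fintype.card_fin, Int.cast_neg, Int.cast_one, abs_neg, abs_one]
    push_cast
    field_simp
  refine ⟨?_, hWprod ▸ hasMeanValue_prod_trigPoly hind α hc hS⟩
  have hmean := hasMeanValue_mul_prod_trigPoly hind α hc hS hS'
  rwa [← hFW, hvalue] at hmean
end
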